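/- arXiv:2009.11285 — 3 statements merged into one kernel-verified Lean document; each statement's English description precedes it below -/
import Mathlib

section
/- Let d ≥ 1, 0 < p, q ≤ ∞, a ∈ Ω = [0,1]^d, ξ > 0, s > 0 and ε > 0. Let s(·) : Ω → (0,∞) be log-Hölder continuous with inf_Ω s(·) > 0, and suppose that s(x) < s + ε for every x ∈ [a−ξ, a+ξ]^d ∩ Ω. Fix an integer r with r > s + ε and r > sup_Ω s(·), used in both moduli of smoothness. Then there exists a constant C > 0, independent of f, such that every f ∈ B_{p,q}^{s+ε}(Ω) whose support is contained in [a−ξ/2, a+ξ/2]^d satisfies ‖f‖_{B_{p,q}^{s(x)}(Ω)} ≤ C ‖f‖_{B_{p,q}^{s+ε}(Ω)}. -/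
open MeasureTheory
open scoped ENNReal NNReal Classical

noncomputable section

abbrev Euc (d : ℕ) : Type := EuclideanSpace ℝ (Fin d)

/-- The unit cube `Ω = [0,1]^d`. -/
def unitCube (d : ℕ) : Set (Euc d) := {x | ∀ i, x i ∈ Set.Icc (0 : ℝ) 1}

/-- The axis-aligned cube `[c - t, c + t]^d`. -/
def cubeAt {d : ℕ} (c : Euc d) (t : ℝ) : Set (Euc d) := {x | ∀ i, |x i - c i| ≤ t}

/-- Lebesgue measure restricted to the unit cube `Ω`. -/
def cubeMeasure (d : ℕ) : Measure (Euc d) := volume.restrict (unitCube d)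

/-- `r`-th difference `Δ_h^r f (x) = Σ_{j=0}^r (−1)^{r−j} C(r,j) f(x+jh)`, set to `0`
unless both `x ∈ Ω` and `x + r h ∈ Ω`. -/
def rDiff {d : ℕ} (r : ℕ) (h : Euc d) (f : Euc d → ℝ) (x : Euc d) : ℝ :=
  if x ∈ unitCube d ∧ x + (r : ℝ) • h ∈ unitCube d then
    ∑ j ∈ Finset.range (r + 1), (-1 : ℝ) ^ (r - j) * (r.choose j : ℝ) * f (x + (j : ℝ) • h)
  else 0

/-- `ω*_{r,p}(f,t) = sup_{‖h‖₂ ≤ t} ‖ t^{−s(·)} Δ_h^r f ‖_{L^p(Ω)}`. -/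
def omegaStar {d : ℕ} (p : ℝ≥0∞) (σ : Euc d → ℝ) (r : ℕ) (f : Euc d → ℝ) (t : ℝ) : ℝ≥0∞ :=
  ⨆ h ∈ {h : Euc d | ‖h‖ ≤ t},
    eLpNorm (fun x => t ^ (-(σ x)) * rDiff r h f x) p (cubeMeasure d)

/-- Variable-exponent Besov seminorm `|f|_{B^{s(x)}_{p,q}(Ω)}` (difference order `r`):
`(∫_0^1 ω*_{r,p}(f,t)^q dt/t)^{1/q}` for `q < ∞`, and `sup_{t>0} ω*_{r,p}(f,t)` for `q = ∞`. -/
def vBesovSemi {d : ℕ} (p q : ℝ≥0∞) (σ : Euc d → ℝ) (r : ℕ) (f : Euc d → ℝ) : ℝ≥0∞ :=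
  if q = ∞ then ⨆ t ∈ Set.Ioi (0 : ℝ), omegaStar p σ r f t
  else (∫⁻ t in Set.Ioo (0 : ℝ) 1,
        (omegaStar p σ r f t) ^ q.toReal * ENNReal.ofReal (1 / t)) ^ (1 / q.toReal)

/-- Variable-exponent Besov (quasi-)norm with explicit difference order `r`:
`‖f‖ = ‖f‖_{L^p(Ω)} + |f|_{B^{s(x)}_{p,q}(Ω)}`. -/
def vBesovNormR {d : ℕ} (p q : ℝ≥0∞) (σ : Euc d → ℝ) (r : ℕ) (f : Euc d → ℝ) : ℝ≥0∞ :=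
  eLpNorm f p (cubeMeasure d) + vBesovSemi p q σ r f

/-- The canonical difference order `r = ⌊sup_Ω s(·)⌋ + 1`. -/
def besovR {d : ℕ} (σ : Euc d → ℝ) : ℕ := ⌊sSup (σ '' unitCube d)⌋₊ + 1

/-- Variable-exponent Besov (quasi-)norm `‖f‖_{B^{s(x)}_{p,q}(Ω)}` with the canonical
difference order `r = ⌊sup_Ω s(·)⌋ + 1`. -/
def vBesovNorm {d : ℕ} (p q : ℝ≥0∞) (σ : Euc d → ℝ) (f : Euc d → ℝ) : ℝ≥0∞ :=
  vBesovNormR p q σ (besovR σ) f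

/-- The unit ball `U_{B^{s(x)}_{p,q}(Ω)}`. -/
def vBesovUnitBall (d : ℕ) (p q : ℝ≥0∞) (σ : Euc d → ℝ) : Set (Euc d → ℝ) :=
  {f | vBesovNorm p q σ f ≤ 1}

/-- log-Hölder continuity on the unit cube: there exists `c_log > 0` with
`|σ x − σ y| ≤ c_log / log (e + 1/‖x−y‖₂)` for all `x ≠ y` in `Ω`. -/
def LogHolder {d : ℕ} (σ : Euc d → ℝ) : Prop :=
  ∃ c : ℝ, 0 < c ∧ ∀ x ∈ unitCube d, ∀ y ∈ unitCube d, x ≠ y →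
    |σ x - σ y| ≤ c / Real.log (Real.exp 1 + 1 / ‖x - y‖)

/-- Univariate cardinal B-spline of degree `m`. -/
def bspline (m : ℕ) (x : ℝ) : ℝ :=
  (m.factorial : ℝ)⁻¹ *
    ∑ j ∈ Finset.range (m + 2), (-1 : ℝ) ^ j * ((m + 1).choose j : ℝ) * max (x - j) 0 ^ m

/-- Tensor-product cardinal B-spline `M_{k,j}^d(x) = M_{0,0}^d(2^k x − j)`. -/
def Mspline (d m : ℕ) (k : ℕ) (j : Fin d → ℤ) (x : Euc d) : ℝ :=
  ∏ i, bspline m ((2 : ℝ) ^ k * x i - (j i : ℝ))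

/-!
Only points within distance `r‖h‖` of `supp f` contribute to `Δ_h^r f`. For steps
`‖h‖ ≤ t ≤ t₀ = min (ξ / 2r) 1` these lie in `[a - ξ, a + ξ]^d`, where `σ < s + ε`, so
`t^{-σ(x)} ≤ t^{-(s+ε)}`; for `t₀ < t ≤ 1` the bound `σ < r` still gives
`t^{-σ(x)} ≤ t₀^{s+ε-r} t^{-(s+ε)}`. For `t > 1` we have `t^{-σ(x)} ≤ 1`, and `Δ_h^r f = 0`
unless `‖h‖ ≤ √d`, so `ω*_{r,p}(f, t)` is bounded by a multiple of the constant-exponent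
modulus at `max 1 √d`.
-/

theorem norm_sub_le_sqrt_of_mem_unitCube {d : ℕ} {x y : Euc d} (hx : x ∈ unitCube d)
    (hy : y ∈ unitCube d) : ‖x - y‖ ≤ √d := by
  rw [EuclideanSpace.norm_eq]
  refine Real.sqrt_le_sqrt ?_
  calc ∑ i, ‖(x - y) i‖ ^ 2 ≤ ∑ _i : Fin d, (1 : ℝ) := by
        refine Finset.sum_le_sum fun i _ => ?_
        obtain ⟨hx₀, hx₁⟩ := hx i
        obtain ⟨hy₀, hy₁⟩ := hy i
        rw [PiLp.sub_apply, Real.norm_eq_abs, sq_abs]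
        nlinarith
    _ = d := by simp

theorem cubeAt_mono {d : ℕ} {a : Euc d} {ρ ρ' : ℝ} (h : ρ ≤ ρ') : cubeAt a ρ ⊆ cubeAt a ρ' :=
  fun _ hx i => (hx i).trans h

theorem mem_cubeAt_of_norm_sub_le {d : ℕ} {a x y : Euc d} {ρ δ : ℝ} (hy : y ∈ cubeAt a ρ)
    (hxy : ‖y - x‖ ≤ δ) : x ∈ cubeAt a (ρ + δ) := fun i => by
  have hi : |y i - x i| ≤ δ := (PiLp.norm_apply_le (y - x) i).trans hxy
  have hyi : |y i - a i| ≤ ρ := hy i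
  calc |x i - a i| = |(y i - a i) - (y i - x i)| := by ring_nf
    _ ≤ |y i - a i| + |y i - x i| := abs_sub _ _
    _ ≤ ρ + δ := add_le_add hyi hi

section Differences

variable {d r : ℕ} {h x : Euc d} {f : Euc d → ℝ}

theorem exists_mem_support_of_rDiff_ne_zero (hx : rDiff r h f x ≠ 0) :
    x ∈ unitCube d ∧ x + (r : ℝ) • h ∈ unitCube d ∧
      ∃ j ≤ r, x + (j : ℝ) • h ∈ Function.support f := by
  unfold rDiff at hx
  split_ifs at hx with hΩ
  · obtain ⟨j, hj, hterm⟩ := Finset.exists_ne_zero_of_sum_ne_zero hx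
    exact ⟨hΩ.1, hΩ.2, j, Nat.lt_succ_iff.mp (Finset.mem_range.mp hj), right_ne_zero_of_mul hterm⟩
  · exact absurd rfl hx

theorem norm_le_sqrt_of_rDiff_ne_zero (hr : 1 ≤ r) (hx : rDiff r h f x ≠ 0) : ‖h‖ ≤ √d := by
  obtain ⟨hx, hxh, -⟩ := exists_mem_support_of_rDiff_ne_zero hx
  calc ‖h‖ ≤ r * ‖h‖ := le_mul_of_one_le_left (norm_nonneg h) (by exact_mod_cast hr)
    _ = ‖(x + (r : ℝ) • h) - x‖ := by simp [norm_smul]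
    _ ≤ √d := norm_sub_le_sqrt_of_mem_unitCube hxh hx

theorem mem_cubeAt_of_rDiff_ne_zero {a : Euc d} {ρ : ℝ}
    (hf : Function.support f ⊆ cubeAt a ρ) (hx : rDiff r h f x ≠ 0) :
    x ∈ cubeAt a (ρ + r * ‖h‖) := by
  obtain ⟨-, -, j, hj, hjf⟩ := exists_mem_support_of_rDiff_ne_zero hx
  refine mem_cubeAt_of_norm_sub_le (hf hjf) ?_
  calc ‖x + (j : ℝ) • h - x‖ = j * ‖h‖ := by simp [norm_smul]
    _ ≤ r * ‖h‖ := by gcongr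

end Differences

theorem rpow_neg_le_rpow_sub_mul_rpow_neg {t t₀ α β r : ℝ} (ht : 0 < t) (ht₁ : t ≤ 1)
    (ht₀ : 0 < t₀) (ht₀₁ : t₀ ≤ 1) (hαr : α ≤ r) (hβr : β ≤ r) (hαβ : t ≤ t₀ → α ≤ β) :
    t ^ (-α) ≤ t₀ ^ (β - r) * t ^ (-β) := by
  rcases le_or_gt t t₀ with htt₀ | ht₀t
  · calc t ^ (-α) ≤ t ^ (-β) := Real.rpow_le_rpow_of_exponent_ge ht ht₁ (by linarith [hαβ htt₀])
      _ ≤ t₀ ^ (β - r) * t ^ (-β) := le_mul_of_one_le_left (by positivity)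
          (Real.one_le_rpow_of_pos_of_le_one_of_nonpos ht₀ ht₀₁ (by linarith))
  · calc t ^ (-α) ≤ t ^ (-r) := Real.rpow_le_rpow_of_exponent_ge ht ht₁ (by linarith)
      _ = t ^ (β - r) * t ^ (-β) := by rw [← Real.rpow_add ht]; ring_nf
      _ ≤ t₀ ^ (β - r) * t ^ (-β) := mul_le_mul_of_nonneg_right
          (Real.rpow_le_rpow_of_nonpos ht₀ ht₀t.le (by linarith)) (by positivity)

section Moduli

variable {d : ℕ} {p q : ℝ≥0∞} {σ τ : Euc d → ℝ} {r : ℕ} {f : Euc d → ℝ}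

theorem omegaStar_le_of_weight_le {t u c : ℝ} (ht : 0 ≤ t) (hu : 0 ≤ u)
    (H : ∀ h : Euc d, ‖h‖ ≤ t → ∀ x, rDiff r h f x ≠ 0 →
      ‖h‖ ≤ u ∧ t ^ (-σ x) ≤ c * u ^ (-τ x)) :
    omegaStar p σ r f t ≤ ENNReal.ofReal c * omegaStar p τ r f u := by
  refine iSup₂_le fun h hh => ?_
  by_cases hzero : ∀ x, rDiff r h f x = 0
  · simp [hzero]
  push Not at hzero
  obtain ⟨x₀, hx₀⟩ := hzero
  calc eLpNorm (fun x => t ^ (-σ x) * rDiff r h f x) p (cubeMeasure d)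
      ≤ ENNReal.ofReal c * eLpNorm (fun x => u ^ (-τ x) * rDiff r h f x) p (cubeMeasure d) := by
        refine eLpNorm_le_mul_eLpNorm_of_ae_le_mul (ae_of_all _ fun x => ?_) p
        by_cases hx : rDiff r h f x = 0
        · simp [hx]
        rw [norm_mul, norm_mul, ← mul_assoc, Real.norm_of_nonneg (Real.rpow_nonneg ht _),
          Real.norm_of_nonneg (Real.rpow_nonneg hu _)]
        exact mul_le_mul_of_nonneg_right (H h hh x hx).2 (norm_nonneg _)
    _ ≤ _ := by
        gcongr
        exact le_iSup₂ (f := fun (h : Euc d) (_ : ‖h‖ ≤ u) =>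
          eLpNorm (fun x => u ^ (-τ x) * rDiff r h f x) p (cubeMeasure d)) h (H h hh x₀ hx₀).1

end Moduli

section Norms

variable {d : ℕ} {p q : ℝ≥0∞} {σ τ : Euc d → ℝ} {r : ℕ} {f : Euc d → ℝ}

theorem vBesovSemi_le_of_omegaStar_le (hq : 0 < q) {c : ℝ}
    (hsmall : ∀ t ∈ Set.Ioc (0 : ℝ) 1,
      omegaStar p σ r f t ≤ ENNReal.ofReal c * omegaStar p τ r f t)
    (hlarge : ∀ t, 1 < t → ∃ u, 0 < u ∧
      omegaStar p σ r f t ≤ ENNReal.ofReal c * omegaStar p τ r f u) :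
    vBesovSemi p q σ r f ≤ ENNReal.ofReal c * vBesovSemi p q τ r f := by
  unfold vBesovSemi
  split_ifs with hq_top
  · have hle_sup : ∀ u : ℝ, 0 < u →
        omegaStar p τ r f u ≤ ⨆ u ∈ Set.Ioi (0 : ℝ), omegaStar p τ r f u := fun u hu =>
      le_iSup₂ (f := fun (u : ℝ) (_ : u ∈ Set.Ioi (0 : ℝ)) => omegaStar p τ r f u) u hu
    refine iSup₂_le fun t (ht : 0 < t) => ?_
    rcases le_or_gt t 1 with ht₁ | ht₁
    · exact (hsmall t ⟨ht, ht₁⟩).trans (by gcongr; exact hle_sup t ht)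
    · obtain ⟨u, hu, hωu⟩ := hlarge t ht₁
      exact hωu.trans (by gcongr; exact hle_sup u hu)
  · have hq' : 0 < q.toReal := ENNReal.toReal_pos hq.ne' hq_top
    have hcq : ENNReal.ofReal c ^ q.toReal ≠ ∞ :=
      ENNReal.rpow_ne_top_of_nonneg hq'.le ENNReal.ofReal_ne_top
    calc (∫⁻ t in Set.Ioo (0 : ℝ) 1,
            omegaStar p σ r f t ^ q.toReal * ENNReal.ofReal (1 / t)) ^ (1 / q.toReal)
        ≤ (∫⁻ t in Set.Ioo (0 : ℝ) 1, ENNReal.ofReal c ^ q.toReal *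
            (omegaStar p τ r f t ^ q.toReal * ENNReal.ofReal (1 / t))) ^ (1 / q.toReal) := by
          refine ENNReal.rpow_le_rpow (setLIntegral_mono' measurableSet_Ioo fun t ht => ?_)
            (by positivity)
          rw [← mul_assoc, ← ENNReal.mul_rpow_of_nonneg _ _ hq'.le]
          gcongr
          exact hsmall t ⟨ht.1, ht.2.le⟩
      _ = ENNReal.ofReal c * (∫⁻ t in Set.Ioo (0 : ℝ) 1,
            omegaStar p τ r f t ^ q.toReal * ENNReal.ofReal (1 / t)) ^ (1 / q.toReal) := by
          rw [lintegral_const_mul' _ _ hcq, ENNReal.mul_rpow_of_nonneg _ _ (by positivity),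
            ← ENNReal.rpow_mul, mul_one_div_cancel hq'.ne', ENNReal.rpow_one]

theorem vBesovNormR_le_of_vBesovSemi_le {c : ℝ} (hc : 1 ≤ c)
    (h : vBesovSemi p q σ r f ≤ ENNReal.ofReal c * vBesovSemi p q τ r f) :
    vBesovNormR p q σ r f ≤ ENNReal.ofReal c * vBesovNormR p q τ r f := by
  rw [vBesovNormR, vBesovNormR, mul_add]
  gcongr
  exact le_mul_of_one_le_left zero_le (ENNReal.one_le_ofReal.mpr hc)

end Norms

section LocalizedModuli

variable {d : ℕ} {p : ℝ≥0∞} {σ : Euc d → ℝ} {r : ℕ} {f : Euc d → ℝ} {τ t : ℝ}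

theorem omegaStar_le_of_support_subset {a : Euc d} {ξ : ℝ} (hξ : 0 < ξ) (hr : 0 < r)
    (hf : Function.support f ⊆ cubeAt a (ξ / 2))
    (hσloc : ∀ x ∈ unitCube d ∩ cubeAt a ξ, σ x ≤ τ) (hσr : ∀ x ∈ unitCube d, σ x ≤ r)
    (hτr : τ ≤ r) (ht : t ∈ Set.Ioc 0 1) :
    omegaStar p σ r f t ≤
      ENNReal.ofReal (min (ξ / (2 * r)) 1 ^ (τ - r)) * omegaStar p (fun _ => τ) r f t := by
  have hr' : (0 : ℝ) < r := by exact_mod_cast hr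
  refine omegaStar_le_of_weight_le ht.1.le ht.1.le fun h hh x hx => ⟨hh, ?_⟩
  have hxΩ := (exists_mem_support_of_rDiff_ne_zero hx).1
  refine rpow_neg_le_rpow_sub_mul_rpow_neg ht.1 ht.2 (lt_min (by positivity) one_pos)
    (min_le_right _ _) (hσr x hxΩ) hτr fun htt₀ => hσloc x ⟨hxΩ, ?_⟩
  have hrh : r * ‖h‖ ≤ ξ / 2 := calc
    r * ‖h‖ ≤ r * (ξ / (2 * r)) := by gcongr; exact hh.trans (htt₀.trans (min_le_left _ _))
    _ = ξ / 2 := by field_simp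
  exact cubeAt_mono (by linarith) (mem_cubeAt_of_rDiff_ne_zero hf hx)

theorem omegaStar_le_of_one_lt (hr : 1 ≤ r) (hσ : ∀ x ∈ unitCube d, 0 ≤ σ x) (ht : 1 < t) :
    omegaStar p σ r f t ≤
      ENNReal.ofReal (max 1 √d ^ τ) * omegaStar p (fun _ => τ) r f (max 1 √d) := by
  have hT : (0 : ℝ) < max 1 √d := lt_max_of_lt_left one_pos
  refine omegaStar_le_of_weight_le (by linarith) hT.le fun h _ x hx => ⟨?_, ?_⟩
  · exact (norm_le_sqrt_of_rDiff_ne_zero hr hx).trans (le_max_right _ _)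
  · have hσx := hσ x (exists_mem_support_of_rDiff_ne_zero hx).1
    calc t ^ (-σ x) ≤ 1 := Real.rpow_le_one_of_one_le_of_nonpos ht.le (by linarith)
      _ = max 1 √d ^ τ * max 1 √d ^ (-τ) := by
        rw [← Real.rpow_add hT, add_neg_cancel, Real.rpow_zero]

end LocalizedModuli

theorem vBesov_norm_le_of_small_support_general (d : ℕ) (p q : ℝ≥0∞)
    (hq : 0 < q) (a : Euc d) (ξ : ℝ) (hξ : 0 < ξ)
    (s ε : ℝ) (hs : 0 < s) (hε : 0 < ε)
    (σ : Euc d → ℝ)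
    (hσinf : ∃ σ₀ : ℝ, 0 < σ₀ ∧ ∀ x ∈ unitCube d, σ₀ ≤ σ x)
    (hσloc : ∀ x ∈ unitCube d ∩ cubeAt a ξ, σ x < s + ε)
    (r : ℕ) (hr₁ : s + ε < (r : ℝ)) (hr₂ : ∀ x ∈ unitCube d, σ x < (r : ℝ)) :
    ∃ C : ℝ, 0 < C ∧ ∀ f : Euc d → ℝ,
      Function.support f ⊆ cubeAt a (ξ / 2) →
      vBesovNormR p q (fun _ => s + ε) r f ≠ ∞ →
      vBesovNormR p q σ r f ≤ ENNReal.ofReal C * vBesovNormR p q (fun _ => s + ε) r f := by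
  obtain ⟨σ₀, hσ₀, hσ₀_le⟩ := hσinf
  have hr : 0 < r := by exact_mod_cast (show (0 : ℝ) < r by linarith)
  set C := max (min (ξ / (2 * r)) 1 ^ (s + ε - r)) (max 1 √d ^ (s + ε))
  have hC : 1 ≤ C := le_max_of_le_left <| Real.one_le_rpow_of_pos_of_le_one_of_nonpos
    (lt_min (by positivity) one_pos) (min_le_right _ _) (by linarith)
  refine ⟨C, by linarith, fun f hf _ => vBesovNormR_le_of_vBesovSemi_le hC ?_⟩
  refine vBesovSemi_le_of_omegaStar_le hq (fun t ht => ?_)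
    (fun t ht => ⟨max 1 √d, lt_max_of_lt_left one_pos, ?_⟩)
  · refine (omegaStar_le_of_support_subset hξ hr hf (fun x hx => (hσloc x hx).le)
      (fun x hx => (hr₂ x hx).le) hr₁.le ht).trans ?_
    gcongr
    exact le_max_left _ _
  · refine (omegaStar_le_of_one_lt (τ := s + ε) hr (fun x hx => hσ₀.le.trans (hσ₀_le x hx)) ht).trans ?_
    gcongr
    exact le_max_right _ _

/-- Lemma 3.1. Let `a ∈ Ω`, `ξ > 0`, `s, ε > 0`, and let `σ` be a
log-Hölder continuous smoothness function with positive infimum on `Ω` satisfying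
`σ x < s + ε` on `[a−ξ, a+ξ]^d ∩ Ω`. Fix an integer `r` with `r > s + ε` and `r > sup_Ω σ`.
Then there is `C > 0` (independent of `f`) such that every `f ∈ B^{s+ε}_{p,q}(Ω)` supported
in `[a−ξ/2, a+ξ/2]^d` satisfies `‖f‖_{B^{σ}_{p,q}(Ω)} ≤ C ‖f‖_{B^{s+ε}_{p,q}(Ω)}`. -/
theorem vBesov_norm_le_of_small_support (d : ℕ) (hd : 1 ≤ d) (p q : ℝ≥0∞)
    (hp : 0 < p) (hq : 0 < q) (a : Euc d) (ha : a ∈ unitCube d) (ξ : ℝ) (hξ : 0 < ξ)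
    (s ε : ℝ) (hs : 0 < s) (hε : 0 < ε)
    (σ : Euc d → ℝ) (hσlh : LogHolder σ)
    (hσinf : ∃ σ₀ : ℝ, 0 < σ₀ ∧ ∀ x ∈ unitCube d, σ₀ ≤ σ x)
    (hσloc : ∀ x ∈ unitCube d ∩ cubeAt a ξ, σ x < s + ε)
    (r : ℕ) (hr₁ : s + ε < (r : ℝ)) (hr₂ : ∀ x ∈ unitCube d, σ x < (r : ℝ)) :
    ∃ C : ℝ, 0 < C ∧ ∀ f : Euc d → ℝ,
      Function.support f ⊆ cubeAt a (ξ / 2) →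
      vBesovNormR p q (fun _ => s + ε) r f ≠ ∞ →
      vBesovNormR p q σ r f ≤ ENNReal.ofReal C * vBesovNormR p q (fun _ => s + ε) r f :=
  vBesov_norm_le_of_small_support_general d p q hq a ξ hξ s ε hs hε σ hσinf hσloc r hr₁ hr₂
end
end

section
/- Let d ≥ 1, F > 0, r > 0, ε > 0, t > 0, c ∈ ℝ^d, and A = [c−t, c+t]^d. Let η(u) = max(u,0), and for ξ > 0 define g_i(x_i) = η((x_i − c_i + t)/ξ + 1) − η((x_i − c_i + t)/ξ) − η((x_i − c_i − t)/ξ) + η((x_i − c_i − t)/ξ − 1) and g(x) = Π_{i=1}^d g_i(x_i). If 0 < ξ ≤ min{ε^r / (2^d (d+1) F^r t^{d−1}), t/2^d}, then every measurable f : ℝ^d → ℝ with |f(x)| ≤ F for all x satisfies ∫_{ℝ^d \ A} |f(x) g(x)|^r dx ≤ ε^r, i.e. ‖f g‖_{L^r(A^c)} ≤ ε. -/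
/-!
Each factor `g_i` is the difference of two clamps to `[0,1]` of affine functions of `x_i`,
the subtracted one smaller, so `0 ≤ g ≤ 1`, and `g` vanishes off the cube of half-side `t + ξ`.
Hence `|f g|^r ≤ F^r` is supported, outside `A`, on a shell of volume
`(2(t+ξ))^d - (2t)^d ≤ 2^d d ξ (t+ξ)^(d-1)`.
Since `ξ ≤ t / 2^d`, `d (t+ξ)^(d-1) ≤ d (1 + 2^(-d))^(d-1) t^(d-1) ≤ (d+1) t^(d-1)`, the last
step because `(1+x)^n ≤ e^(nx) ≤ 1/(1-nx)` and `(d-1)(d+1) ≤ 2^d`.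
-/

open MeasureTheory Set
open scoped ENNReal

noncomputable section

/-- The ReLU function `η(u) = max(u, 0)`. -/
def relu (u : ℝ) : ℝ := max u 0

/-- The univariate trapezoidal cutoff
`g_i(x_i) = η((x_i−c_i+t)/ξ + 1) − η((x_i−c_i+t)/ξ) − η((x_i−c_i−t)/ξ) + η((x_i−c_i−t)/ξ − 1)`. -/
def cutoff1 (t ξ ci xi : ℝ) : ℝ :=
  relu ((xi - ci + t) / ξ + 1) - relu ((xi - ci + t) / ξ)
    - relu ((xi - ci - t) / ξ) + relu ((xi - ci - t) / ξ - 1)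

/-- The product cutoff `g(x) = Π_{i=1}^d g_i(x_i)`. -/
def cutoff {d : ℕ} (c : Euc d) (t ξ : ℝ) (x : Euc d) : ℝ := ∏ i, cutoff1 t ξ (c i) (x i)

theorem setLIntegral_compl_le_mul_measure_diff {α : Type*} [MeasurableSpace α] {μ : Measure α}
    {A B : Set α} {φ : α → ℝ≥0∞} {M : ℝ≥0∞} (hB : MeasurableSet B)
    (hφB : ∀ x ∈ B, φ x ≤ M) (hφ : ∀ x ∉ B, φ x = 0) :
    ∫⁻ x in Aᶜ, φ x ∂μ ≤ M * μ (B \ A) := by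
  have hφM : ∀ x, φ x ≤ B.indicator (fun _ => M) x := fun x => by
    by_cases hx : x ∈ B <;> simp [hx, hφB, hφ]
  calc ∫⁻ x in Aᶜ, φ x ∂μ ≤ ∫⁻ x in Aᶜ, B.indicator (fun _ => M) x ∂μ := lintegral_mono hφM
    _ = M * μ (B \ A) := by rw [lintegral_indicator_const hB, Measure.restrict_apply hB, sdiff_eq]

theorem one_add_pow_le_inv_one_sub_mul {x : ℝ} (hx : 0 ≤ x) {n : ℕ} (hnx : n * x < 1) :
    (1 + x) ^ n ≤ 1 / (1 - n * x) :=
  calc (1 + x) ^ n ≤ Real.exp x ^ n := by gcongr; linarith [Real.add_one_le_exp x]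
    _ = Real.exp (n * x) := (Real.exp_nat_mul x n).symm
    _ ≤ 1 / (1 - n * x) := Real.exp_bound_div_one_sub_of_interval (by positivity) hnx

theorem mul_add_two_le_two_pow_succ : ∀ n : ℕ, n * (n + 2) ≤ 2 ^ (n + 1)
  | 0 | 1 | 2 => by norm_num
  | n + 3 => by
    have ih := mul_add_two_le_two_pow_succ (n + 2)
    rw [pow_succ]
    nlinarith

theorem natCast_mul_one_add_inv_two_pow_pow_le (d : ℕ) :
    (d : ℝ) * (1 + 1 / 2 ^ d) ^ (d - 1) ≤ d + 1 := by
  rcases d with _ | n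
  · simp
  set x : ℝ := 1 / 2 ^ (n + 1) with hx
  have hnx : n * x * (n + 2) ≤ 1 := by
    have : (n : ℝ) * (n + 2) ≤ 2 ^ (n + 1) := by exact_mod_cast mul_add_two_le_two_pow_succ n
    rw [hx, mul_one_div, div_mul_eq_mul_div, div_le_one (by positivity)]
    exact this
  have hbound := one_add_pow_le_inv_one_sub_mul (x := x) (by positivity) (by nlinarith)
  rw [Nat.add_sub_cancel]
  push_cast
  calc ((n : ℝ) + 1) * (1 + x) ^ n ≤ (n + 1) * (1 / (1 - n * x)) := by gcongr
    _ ≤ n + 1 + 1 := by rw [mul_one_div, div_le_iff₀ (by nlinarith)]; nlinarith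

theorem add_pow_sub_pow_le {d : ℕ} {t ξ : ℝ} (ht : 0 < t) (hξ0 : 0 ≤ ξ) (hξ : ξ ≤ t / 2 ^ d) :
    (t + ξ) ^ d - t ^ d ≤ (d + 1) * t ^ (d - 1) * ξ := by
  have hmv : (t + ξ) ^ d - t ^ d ≤ ξ * d * (t + ξ) ^ (d - 1) := by
    have := abs_pow_sub_pow_le (t + ξ) t d
    rwa [abs_of_nonneg (sub_nonneg.2 (pow_le_pow_left₀ ht.le (by linarith) d)),
      add_sub_cancel_left, abs_of_nonneg hξ0, abs_of_pos ht, abs_of_pos (by linarith),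
      max_eq_left (by linarith)] at this
  have hpow : (t + ξ) ^ (d - 1) ≤ t ^ (d - 1) * (1 + 1 / 2 ^ d) ^ (d - 1) := by
    rw [← mul_pow]
    gcongr
    calc t + ξ ≤ t + t / 2 ^ d := by linarith
      _ = t * (1 + 1 / 2 ^ d) := by ring
  calc (t + ξ) ^ d - t ^ d ≤ ξ * d * (t ^ (d - 1) * (1 + 1 / 2 ^ d) ^ (d - 1)) := by
        refine hmv.trans ?_; gcongr
    _ = ξ * t ^ (d - 1) * (d * (1 + 1 / 2 ^ d) ^ (d - 1)) := by ring
    _ ≤ ξ * t ^ (d - 1) * (d + 1) := by gcongr; exact natCast_mul_one_add_inv_two_pow_pow_le d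
    _ = (d + 1) * t ^ (d - 1) * ξ := by ring

section Cutoff

theorem relu_add_one_sub_relu (u : ℝ) :
    relu (u + 1) - relu u = (projIcc (0 : ℝ) 1 zero_le_one (u + 1) : ℝ) := by
  rw [relu, relu, coe_projIcc]; grind

theorem cutoff1_eq_sub (t ξ ci xi : ℝ) :
    cutoff1 t ξ ci xi = (projIcc (0 : ℝ) 1 zero_le_one ((xi - ci + t) / ξ + 1) : ℝ)
      - projIcc (0 : ℝ) 1 zero_le_one ((xi - ci - t) / ξ) := by
  have h := relu_add_one_sub_relu ((xi - ci - t) / ξ - 1)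
  rw [sub_add_cancel] at h
  rw [cutoff1, ← relu_add_one_sub_relu, ← h]
  ring

variable {t ξ : ℝ}

theorem cutoff1_mem_Icc (ht : 0 ≤ t) (hξ : 0 < ξ) (ci xi : ℝ) : cutoff1 t ξ ci xi ∈ Icc 0 1 := by
  have hle : (xi - ci - t) / ξ ≤ (xi - ci + t) / ξ + 1 := by
    have : (xi - ci - t) / ξ ≤ (xi - ci + t) / ξ := by gcongr; linarith
    linarith
  rw [cutoff1_eq_sub]
  refine ⟨sub_nonneg.2 (Subtype.coe_le_coe.2 (monotone_projIcc zero_le_one hle)), ?_⟩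
  linarith [(projIcc (0 : ℝ) 1 zero_le_one ((xi - ci + t) / ξ + 1)).2.2,
    (projIcc (0 : ℝ) 1 zero_le_one ((xi - ci - t) / ξ)).2.1]

theorem cutoff1_eq_zero (ht : 0 ≤ t) (hξ : 0 < ξ) {ci xi : ℝ} (h : t + ξ ≤ |xi - ci|) :
    cutoff1 t ξ ci xi = 0 := by
  rw [cutoff1_eq_sub, sub_eq_zero]
  congr 1
  rcases le_abs.mp h with h | h
  · rw [projIcc_of_right_le _ (le_add_of_nonneg_left (div_nonneg (by linarith) hξ.le)),
      projIcc_of_right_le _ (by rw [le_div_iff₀ hξ]; linarith)]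
  · have hlt : (xi - ci + t) / ξ ≤ -1 := by rw [div_le_iff₀ hξ]; linarith
    rw [projIcc_of_le_left _ (by linarith),
      projIcc_of_le_left _ (by rw [div_le_iff₀ hξ]; linarith)]

variable {d : ℕ} (c : Euc d)

theorem abs_cutoff_le_one (ht : 0 ≤ t) (hξ : 0 < ξ) (x : Euc d) : |cutoff c t ξ x| ≤ 1 := by
  rw [cutoff, Finset.abs_prod]
  refine Finset.prod_le_one (fun _ _ => abs_nonneg _) fun i _ => ?_
  obtain ⟨h0, h1⟩ := cutoff1_mem_Icc ht hξ (c i) (x i)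
  rwa [abs_of_nonneg h0]

theorem cutoff_eq_zero_of_notMem_cubeAt (ht : 0 ≤ t) (hξ : 0 < ξ) {x : Euc d}
    (hx : x ∉ cubeAt c (t + ξ)) : cutoff c t ξ x = 0 := by
  obtain ⟨i, hi⟩ : ∃ i, t + ξ < |x i - c i| := by simpa [cubeAt] using hx
  exact Finset.prod_eq_zero (Finset.mem_univ i) (cutoff1_eq_zero ht hξ hi.le)

end Cutoff

section Cube

variable {d : ℕ} (c : Euc d)

theorem isClosed_cubeAt (t : ℝ) : IsClosed (cubeAt c t) := by
  simp only [cubeAt, ofPred_forall]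
  exact isClosed_iInter fun i => isClosed_le (by fun_prop) continuous_const

theorem cubeAt_mono_s9 {t s : ℝ} (hts : t ≤ s) : cubeAt c t ⊆ cubeAt c s :=
  fun _ hx i => (hx i).trans hts

theorem volume_cubeAt {t : ℝ} (ht : 0 ≤ t) :
    volume (cubeAt c t) = ENNReal.ofReal ((2 * t) ^ d) := by
  have he : cubeAt c t = (MeasurableEquiv.toLp 2 (Fin d → ℝ)).symm ⁻¹'
      univ.pi fun i => Icc (c i - t) (c i + t) := by
    ext x
    simp only [cubeAt, mem_ofPred_eq, mem_preimage, mem_univ_pi, mem_Icc, abs_le]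
    exact forall_congr' fun i => show _ ↔ c i - t ≤ x i ∧ x i ≤ c i + t by
      constructor <;> intro h <;> constructor <;> linarith [h.1, h.2]
  rw [he, (EuclideanSpace.volume_preserving_symm_measurableEquiv_toLp (Fin d)).measure_preimage
    (MeasurableSet.univ_pi fun i => measurableSet_Icc).nullMeasurableSet, volume_pi_pi]
  simp only [Real.volume_Icc, add_sub_sub_cancel, ← two_mul, Finset.prod_const, Finset.card_univ,
    Fintype.card_fin, ENNReal.ofReal_pow (by linarith : 0 ≤ 2 * t)]

theorem volume_cubeAt_diff_cubeAt {t s : ℝ} (ht : 0 ≤ t) (hts : t ≤ s) :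
    volume (cubeAt c s \ cubeAt c t) = ENNReal.ofReal ((2 * s) ^ d - (2 * t) ^ d) := by
  rw [measure_sdiff (cubeAt_mono_s9 c hts) (isClosed_cubeAt c t).measurableSet.nullMeasurableSet
      (by simp [volume_cubeAt c ht]), volume_cubeAt c ht, volume_cubeAt c (ht.trans hts),
    ← ENNReal.ofReal_sub _ (by positivity)]

end Cube

theorem cutoff_tail_bound_general (d : ℕ) (F r ε t : ℝ)
    (hF : 0 < F) (hr : 0 < r) (ht : 0 < t) (c : Euc d) (ξ : ℝ) (hξ0 : 0 < ξ)
    (hξ : ξ ≤ min (ε ^ r / (2 ^ d * (d + 1) * F ^ r * t ^ (d - 1))) (t / 2 ^ d))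
    (f : Euc d → ℝ) (hfb : ∀ x, |f x| ≤ F) :
    ∫⁻ x in (cubeAt c t)ᶜ, ENNReal.ofReal (|f x * cutoff c t ξ x| ^ r) ≤
      ENNReal.ofReal (ε ^ r) := by
  obtain ⟨hξε, hξt⟩ := le_min_iff.mp hξ
  have hFr : 0 < F ^ r := Real.rpow_pos_of_pos hF r
  have hpoint (x : Euc d) : |f x * cutoff c t ξ x| ^ r ≤ F ^ r := by
    gcongr
    rw [abs_mul, ← mul_one F]
    exact mul_le_mul (hfb x) (abs_cutoff_le_one c ht.le hξ0 x) (abs_nonneg _) hF.le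
  have hshell : F ^ r * ((2 * (t + ξ)) ^ d - (2 * t) ^ d) ≤ ε ^ r := by
    rw [le_div_iff₀ (by positivity)] at hξε
    calc F ^ r * ((2 * (t + ξ)) ^ d - (2 * t) ^ d) = F ^ r * 2 ^ d * ((t + ξ) ^ d - t ^ d) := by
          rw [mul_pow, mul_pow]; ring
      _ ≤ F ^ r * 2 ^ d * ((d + 1) * t ^ (d - 1) * ξ) := by
          gcongr; exact add_pow_sub_pow_le ht hξ0.le hξt
      _ ≤ ε ^ r := by linarith
  calc ∫⁻ x in (cubeAt c t)ᶜ, ENNReal.ofReal (|f x * cutoff c t ξ x| ^ r)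
      ≤ ENNReal.ofReal (F ^ r) * volume (cubeAt c (t + ξ) \ cubeAt c t) :=
        setLIntegral_compl_le_mul_measure_diff (isClosed_cubeAt c _).measurableSet
          (fun x _ => ENNReal.ofReal_le_ofReal (hpoint x)) fun x hx => by
            simp [cutoff_eq_zero_of_notMem_cubeAt c ht.le hξ0 hx, Real.zero_rpow hr.ne']
    _ ≤ ENNReal.ofReal (ε ^ r) := by
        rw [volume_cubeAt_diff_cubeAt c ht.le (by linarith), ← ENNReal.ofReal_mul hFr.le]
        exact ENNReal.ofReal_le_ofReal hshell

/-- If `0 < ξ ≤ min { ε^r / (2^d (d+1) F^r t^{d−1}), t/2^d }` and `|f| ≤ F`,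
then `∫_{A^c} |f g|^r dx ≤ ε^r`, i.e. `‖f g‖_{L^r(A^c)} ≤ ε`. -/
theorem cutoff_tail_bound (d : ℕ) (hd : 1 ≤ d) (F r ε t : ℝ)
    (hF : 0 < F) (hr : 0 < r) (hε : 0 < ε) (ht : 0 < t) (c : Euc d) (ξ : ℝ) (hξ0 : 0 < ξ)
    (hξ : ξ ≤ min (ε ^ r / (2 ^ d * (d + 1) * F ^ r * t ^ (d - 1))) (t / 2 ^ d))
    (f : Euc d → ℝ) (hfm : Measurable f) (hfb : ∀ x, |f x| ≤ F) :
    ∫⁻ x in (cubeAt c t)ᶜ, ENNReal.ofReal (|f x * cutoff c t ξ x| ^ r) ≤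
      ENNReal.ofReal (ε ^ r) :=
  cutoff_tail_bound_general d F r ε t hF hr ht c ξ hξ0 hξ f hfb
end
end

section
/- Let m ≥ 1 be an integer and define the univariate cardinal B-spline N(x) = (1/m!) Σ_{j=0}^{m+1} (−1)^j C(m+1, j) max(x − j, 0)^m for x ∈ ℝ. Then 0 ≤ N(x) ≤ 1 for all x ∈ ℝ. -/
noncomputable section

lemma bspline_continuous (m : ℕ) : Continuous (bspline m) := by
  unfold bspline; fun_prop

lemma hasDerivAt_maxpow (k : ℕ) (hk : 1 ≤ k) (u : ℝ) :
    HasDerivAt (fun v : ℝ => max v 0 ^ (k+1)) ((k+1) * max u 0 ^ k) u := by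
  rcases lt_trichotomy u 0 with h | h | h
  · have h0 : max u 0 = 0 := max_eq_right h.le
    have : HasDerivAt (fun _ : ℝ => (0:ℝ)) ((k+1) * max u 0 ^ k) u := by
      rw [h0, zero_pow (by omega), mul_zero]; exact hasDerivAt_const _ _
    refine this.congr_of_eventuallyEq ?_
    filter_upwards [eventually_lt_nhds h] with v hv
    rw [max_eq_right hv.le, zero_pow (by omega)]
  · subst h
    rw [max_self, zero_pow (by omega), mul_zero]
    rw [hasDerivAt_iff_tendsto_slope]
    have hb : ∀ v : ℝ, |slope (fun v : ℝ => max v 0 ^ (k+1)) 0 v| ≤ |v| ^ k := by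
      intro v
      rcases eq_or_ne v 0 with rfl | hv
      · simp [slope]
      · rw [slope_def_field]
        simp only [max_self, zero_pow (by omega : k+1 ≠ 0), sub_zero]
        rw [abs_div, div_le_iff₀ (by positivity)]
        calc |max v 0 ^ (k+1)| = |max v 0| ^ (k+1) := by rw [abs_pow]
          _ ≤ |v| ^ (k+1) := by
              have hmv : |max v 0| ≤ |v| := by
                rw [abs_of_nonneg (le_max_right v 0)]
                exact max_le (le_abs_self v) (abs_nonneg v)
              exact pow_le_pow_left₀ (abs_nonneg _) hmv _
          _ = |v| ^ k * |v| := by ring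
    apply squeeze_zero_norm hb
    have : Filter.Tendsto (fun v : ℝ => |v| ^ k) (nhds 0) (nhds 0) := by
      have := ((continuous_abs.pow k).tendsto (0:ℝ))
      rw [Pi.pow_apply, abs_zero, zero_pow (by omega : k ≠ 0)] at this
      exact this
    exact this.mono_left nhdsWithin_le_nhds
  · have h0 : max u 0 = u := max_eq_left h.le
    have : HasDerivAt (fun v : ℝ => v ^ (k+1)) ((k+1) * max u 0 ^ k) u := by
      rw [h0]; simpa using hasDerivAt_pow (k+1) u
    refine this.congr_of_eventuallyEq ?_
    filter_upwards [eventually_gt_nhds h] with v hv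
    rw [max_eq_left hv.le]

lemma integ_maxpow (k : ℕ) (hk : 1 ≤ k) (a : ℝ) :
    ∫ t in (0:ℝ)..1, max (a - t) 0 ^ k
      = (max a 0 ^ (k+1) - max (a-1) 0 ^ (k+1)) / (k+1) := by
  have hF : ∀ t : ℝ, HasDerivAt (fun s : ℝ => -(max (a - s) 0 ^ (k+1)) / (k+1))
      (max (a - t) 0 ^ k) t := by
    intro t
    have h1 : HasDerivAt (fun s : ℝ => a - s) (-1) t := by
      exact (hasDerivAt_id t).const_sub a
    have h2 := (hasDerivAt_maxpow k hk (a - t)).comp t h1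
    have h3 := h2.neg.div_const ((k:ℝ)+1)
    refine h3.congr_deriv ?_
    field_simp
  have hcont : Continuous (fun t : ℝ => max (a - t) 0 ^ k) := by fun_prop
  rw [intervalIntegral.integral_eq_sub_of_hasDerivAt (fun t _ => hF t)
    (hcont.intervalIntegrable 0 1)]
  push_cast
  ring

lemma sum_pascal (n : ℕ) (g : ℕ → ℝ) :
    ∑ j ∈ Finset.range (n+2), (-1:ℝ)^j * ((n+1).choose j : ℝ) * (g j - g (j+1))
      = ∑ j ∈ Finset.range (n+3), (-1:ℝ)^j * ((n+2).choose j : ℝ) * g j := by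
  have hA : ∑ j ∈ Finset.range (n+2), (-1:ℝ)^j * ((n+1).choose j : ℝ) * g j
      = (∑ j ∈ Finset.range (n+1), (-1:ℝ)^(j+1) * ((n+1).choose (j+1) : ℝ) * g (j+1)) + g 0 := by
    rw [Finset.sum_range_succ' (fun j => (-1:ℝ)^j * ((n+1).choose j : ℝ) * g j) (n+1)]
    simp
  have hext : ∑ j ∈ Finset.range (n+2), (-1:ℝ)^(j+1) * ((n+1).choose (j+1) : ℝ) * g (j+1)
      = ∑ j ∈ Finset.range (n+1), (-1:ℝ)^(j+1) * ((n+1).choose (j+1) : ℝ) * g (j+1) := by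
    rw [Finset.sum_range_succ]
    simp [Nat.choose_eq_zero_of_lt (by omega : n+1 < n+2)]
  rw [Finset.sum_range_succ' (fun j => (-1:ℝ)^j * ((n+2).choose j : ℝ) * g j) (n+2)]
  have hch : ∀ j, ((n+2).choose (j+1) : ℝ) = ((n+1).choose j : ℝ) + ((n+1).choose (j+1) : ℝ) := by
    intro j; rw [Nat.choose_succ_succ]; push_cast; ring
  simp only [mul_sub, Finset.sum_sub_distrib, hch]
  rw [show (∑ j ∈ Finset.range (n+2), (-1:ℝ)^(j+1) * (((n+1).choose j : ℝ) + ((n+1).choose (j+1) : ℝ)) * g (j+1))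
      = (∑ j ∈ Finset.range (n+2), -((-1:ℝ)^j * ((n+1).choose j : ℝ) * g (j+1)))
        + ∑ j ∈ Finset.range (n+2), (-1:ℝ)^(j+1) * ((n+1).choose (j+1) : ℝ) * g (j+1) by
    rw [← Finset.sum_add_distrib]; apply Finset.sum_congr rfl; intro j _; ring]
  rw [hext, Finset.sum_neg_distrib]
  simp only [pow_succ, pow_zero, one_mul, Nat.cast_one, Nat.choose_zero_right] at *
  linarith [hA]

lemma bspline_succ_eq (m : ℕ) (hm : 1 ≤ m) (x : ℝ) :
    bspline (m+1) x = ∫ t in (0:ℝ)..1, bspline m (x - t) := by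
  symm
  have hint : ∀ j : ℕ, IntervalIntegrable
      (fun t : ℝ => (-1:ℝ)^j * ((m+1).choose j : ℝ) * max (x - t - j) 0 ^ m)
      MeasureTheory.volume 0 1 := by
    intro j
    apply Continuous.intervalIntegrable
    fun_prop
  calc ∫ t in (0:ℝ)..1, bspline m (x - t)
      = (m.factorial : ℝ)⁻¹ * ∫ t in (0:ℝ)..1,
          ∑ j ∈ Finset.range (m+2), (-1:ℝ)^j * ((m+1).choose j : ℝ) * max (x - t - j) 0 ^ m := by
        rw [← intervalIntegral.integral_const_mul]
        rfl
    _ = (m.factorial : ℝ)⁻¹ * ∑ j ∈ Finset.range (m+2),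
          ∫ t in (0:ℝ)..1, (-1:ℝ)^j * ((m+1).choose j : ℝ) * max (x - t - j) 0 ^ m := by
        rw [intervalIntegral.integral_finset_sum (fun j _ => hint j)]
    _ = (m.factorial : ℝ)⁻¹ * ∑ j ∈ Finset.range (m+2),
          (-1:ℝ)^j * ((m+1).choose j : ℝ) *
            ((max (x - j) 0 ^ (m+1) - max (x - (j+1):ℝ) 0 ^ (m+1)) / (m+1)) := by
        congr 1
        apply Finset.sum_congr rfl
        intro j _
        rw [intervalIntegral.integral_const_mul]
        congr 1
        have : ∀ t : ℝ, x - t - j = (x - j) - t := by intro t; ring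
        simp_rw [this]
        rw [integ_maxpow m hm (x - j)]
        congr 2
        · push_cast; ring
    _ = bspline (m+1) x := by
        unfold bspline
        rw [show ∑ j ∈ Finset.range (m+2), (-1:ℝ)^j * ((m+1).choose j : ℝ) *
            ((max (x - j) 0 ^ (m+1) - max (x - (j+1):ℝ) 0 ^ (m+1)) / (m+1))
          = ((m:ℝ)+1)⁻¹ * ∑ j ∈ Finset.range (m+2), (-1:ℝ)^j * ((m+1).choose j : ℝ) *
            ((fun j : ℕ => max (x - j) 0 ^ (m+1)) j - (fun j : ℕ => max (x - j) 0 ^ (m+1)) (j+1)) by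
            rw [Finset.mul_sum]; apply Finset.sum_congr rfl; intro j _
            push_cast; field_simp]
        rw [sum_pascal m (fun j : ℕ => max (x - j) 0 ^ (m+1))]
        rw [Nat.factorial_succ]
        push_cast
        rw [mul_inv]
        ring

lemma bspline_one_mem (x : ℝ) : 0 ≤ bspline 1 x ∧ bspline 1 x ≤ 1 := by
  have : bspline 1 x = max x 0 - 2 * max (x-1) 0 + max (x-2) 0 := by
    unfold bspline
    rw [Finset.sum_range_succ, Finset.sum_range_succ, Finset.sum_range_succ,
      Finset.sum_range_zero]
    norm_num
    ring
  rw [this]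
  rcases le_total x 0 with h0 | h0
  · rw [max_eq_right h0, max_eq_right (by linarith), max_eq_right (by linarith)]
    norm_num
  rcases le_total x 1 with h1 | h1
  · rw [max_eq_left h0, max_eq_right (by linarith), max_eq_right (by linarith)]
    constructor <;> linarith
  rcases le_total x 2 with h2 | h2
  · rw [max_eq_left h0, max_eq_left (by linarith), max_eq_right (by linarith)]
    constructor <;> linarith
  · rw [max_eq_left h0, max_eq_left (by linarith), max_eq_left (by linarith)]
    constructor <;> linarith

/-- The cardinal B-spline of degree `m ≥ 1` satisfies `0 ≤ N(x) ≤ 1`. -/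
theorem bspline_nonneg_le_one (m : ℕ) (hm : 1 ≤ m) (x : ℝ) :
    0 ≤ bspline m x ∧ bspline m x ≤ 1 := by
  induction m, hm using Nat.le_induction generalizing x with
  | base => exact bspline_one_mem x
  | succ n hn ih =>
    rw [bspline_succ_eq n hn x]
    have hcont : Continuous (fun t : ℝ => bspline n (x - t)) := by
      exact (bspline_continuous n).comp (by fun_prop)
    constructor
    · apply intervalIntegral.integral_nonneg (by norm_num)
      intro u _; exact (ih (x - u)).1
    · calc ∫ t in (0:ℝ)..1, bspline n (x - t) ≤ ∫ _t in (0:ℝ)..1, (1:ℝ) := by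
            apply intervalIntegral.integral_mono_on (by norm_num)
              (hcont.intervalIntegrable 0 1) (intervalIntegrable_const)
            intro u _; exact (ih (x - u)).2
        _ = 1 := by simp
end
end
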